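/- Consider the trivial extension F^a[u] = 0, ∂_μ g = 0, and let {g·q_a[u], ϑ^μ[u]} be a conservation law multiplier for it and for a current J^μ[u,g], i.e. g F^a q_a + (∂_μ g)ϑ^μ = D_μ J^μ for every smooth u and g. Then: (i) ϑ^μ[u] is a conserved current of F^a[u] = 0 with multiplier q_a[u], i.e. F^a q_a = D_μ ϑ^μ for every smooth u; (ii) g ϑ^μ[u] is a conserved current of the trivial extension with the same multiplier {g q_a, ϑ^μ}, and g ϑ^μ − J^μ is identically conserved. -/

import Mathlib

/-!
Put `g = 0` in the hypothesis and subtract: the divergence of the current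
`J^μ[u, g] - J^μ[u, 0] - g ϑ^μ` is `g (F^a q_a - D_μ ϑ^μ)`, and this current vanishes wherever
`g` does, because `J` only sees the jet of `g`. For compactly supported `g` the current has
compact support, so `∫ g (F^a q_a - D_μ ϑ^μ) = 0`, and the fundamental lemma of the calculus of
variations gives (i). Part (ii) is then the Leibniz rule
`D_μ (g ϑ^μ) = (∂_μ g) ϑ^μ + g D_μ ϑ^μ`, and (iii) is the difference of (ii) and the hypothesis.
-/

namespace Paper

/-- The base space ℝ^{D+1} (coordinates x^μ, μ = 0,…,D). -/
abbrev Ed (D : ℕ) := Fin (D + 1) → ℝ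

/-- Partial derivative ∂_μ of a real function on ℝ^{D+1}. -/
noncomputable def pd {D : ℕ} (μ : Fin (D + 1)) (f : Ed D → ℝ) : Ed D → ℝ :=
  fun x => fderiv ℝ f x (Pi.single μ 1)

/-- Iterated partial derivatives ∂_{μ₁…μ_k} along a list of directions. -/
noncomputable def pds {D : ℕ} : List (Fin (D + 1)) → (Ed D → ℝ) → Ed D → ℝ
  | [], f => f
  | μ :: l, f => pd μ (pds l f)

/-- Total divergence D_μ J^μ of a current. -/
noncomputable def Dvg {D : ℕ} (J : Fin (D + 1) → Ed D → ℝ) : Ed D → ℝ :=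
  fun x => ∑ μ, pd μ (J μ) x

/-- Multi-indices of order ≤ m: ordered tuples of coordinate directions. -/
abbrev MIdx (m D : ℕ) := Σ k : Fin (m + 1), (Fin (k : ℕ) → Fin (D + 1))

def MIdx.toList {m D : ℕ} (β : MIdx m D) : List (Fin (D + 1)) := List.ofFn β.2

def zeroIdx {m D : ℕ} : MIdx m D := ⟨⟨0, Nat.succ_pos m⟩, fun t => t.elim0⟩

def oneIdx {m D : ℕ} (hm : 0 < m) (μ : Fin (D + 1)) : MIdx m D :=
  ⟨⟨1, Nat.succ_lt_succ hm⟩, fun _ => μ⟩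

/-- The jet space of order m for fields indexed by ι. -/
abbrev Jet (ι : Type) (m D : ℕ) := (ι × MIdx m D) → ℝ

/-- The m-jet of a field configuration at a point. -/
noncomputable def jet {D : ℕ} {ι : Type} (m : ℕ) (u : ι → Ed D → ℝ) (x : Ed D) :
    Jet ι m D := fun c => pds (MIdx.toList c.2) (u c.1) x

/-- Evaluation of a local function on a field configuration: f[u](x). -/
noncomputable def realize {D : ℕ} {ι : Type} (m : ℕ) (f : Ed D × Jet ι m D → ℝ)
    (u : ι → Ed D → ℝ) : Ed D → ℝ :=
  fun x => f (x, jet m u x)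

/-- Partial derivative ∂f/∂(∂_β u_i) of a local function w.r.t. a jet coordinate. -/
noncomputable def jpd {D : ℕ} {ι : Type} [Fintype ι] [DecidableEq ι] {m : ℕ}
    (f : Ed D × Jet ι m D → ℝ) (c : ι × MIdx m D) : Ed D × Jet ι m D → ℝ :=
  fun p => fderiv ℝ f p (0, Pi.single c 1)

/-- Smooth fields on Ω. -/
def SmoothFields {D : ℕ} {ι : Type} (Ω : Set (Ed D)) (u : ι → Ed D → ℝ) : Prop :=
  ∀ i, ContDiffOn ℝ (⊤ : ℕ∞) (u i) Ω

/-- Variation δf of a local function along a characteristic, the latter given by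
its realized component functions v_i. -/
noncomputable def variation {D : ℕ} {ι : Type} [Fintype ι] [DecidableEq ι] (m : ℕ)
    (f : Ed D × Jet ι m D → ℝ) (u v : ι → Ed D → ℝ) : Ed D → ℝ :=
  fun x => ∑ c : ι × MIdx m D, jpd f c (x, jet m u x) * pds (MIdx.toList c.2) (v c.1) x

/-- Euler–Lagrange derivative E^i(f) of a local function, evaluated on u. -/
noncomputable def EL {D : ℕ} {ι : Type} [Fintype ι] [DecidableEq ι] (m : ℕ)
    (f : Ed D × Jet ι m D → ℝ) (u : ι → Ed D → ℝ) (i : ι) : Ed D → ℝ :=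
  fun x => ∑ β : MIdx m D, (-1 : ℝ) ^ (β.1 : ℕ) *
    pds (MIdx.toList β) (fun y => jpd f (i, β) (y, jet m u y)) x

/-- The general integration-by-parts boundary current 𝒢^μ. -/
noncomputable def bdryG {D : ℕ} {A : Type} [Fintype A] (m : ℕ)
    (G : A × MIdx m D → Ed D → ℝ) (ε : A → Ed D → ℝ) (μ : Fin (D + 1)) : Ed D → ℝ :=
  fun x => ∑ a : A, ∑ k : Fin m, ∑ lam : Fin (k : ℕ) → Fin (D + 1),
    ∑ j ∈ Finset.range ((k : ℕ) + 1),
      (-1 : ℝ) ^ j *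
        pds ((List.ofFn lam).take j)
          (G (a, ⟨⟨(k : ℕ) + 1, Nat.succ_lt_succ k.isLt⟩, Fin.cons μ lam⟩)) x *
        pds ((List.ofFn lam).drop j) (ε a) x

/-- Ĝ_α = Σ_β (−1)^{|β|} ∂_β G_α^β. -/
noncomputable def hatG {D : ℕ} {A : Type} (m : ℕ)
    (G : A × MIdx m D → Ed D → ℝ) (a : A) : Ed D → ℝ :=
  fun x => ∑ β : MIdx m D, (-1 : ℝ) ^ (β.1 : ℕ) * pds (MIdx.toList β) (G (a, β)) x

/-- The boundary current j^μ of a local function f w.r.t. a characteristic v at u. -/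
noncomputable def lfBdry {D : ℕ} {ι : Type} [Fintype ι] [DecidableEq ι] (m : ℕ)
    (f : Ed D × Jet ι m D → ℝ) (u v : ι → Ed D → ℝ) (μ : Fin (D + 1)) : Ed D → ℝ :=
  bdryG m (fun c x => jpd f c (x, jet m u x)) v μ

/-- j^μ_{(Fρ)}: the boundary current of F^aρ_a in which ρ_a is not differentiated
(ρ_a substituted after the differentiations). -/
noncomputable def jFrho {D : ℕ} {ι κ : Type} [Fintype ι] [DecidableEq ι] [Fintype κ] (m : ℕ)
    (F : κ → Ed D × Jet ι m D → ℝ) (u : ι → Ed D → ℝ) (ρ : κ → Ed D → ℝ)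
    (v : ι → Ed D → ℝ) (μ : Fin (D + 1)) : Ed D → ℝ :=
  bdryG m (fun c x => ∑ a, jpd (F a) c (x, jet m u x) * ρ a x) v μ

/-- j^μ_{(F̃q)}|_{F̃=F}: only q_a is differentiated, F^a treated as a function of x. -/
noncomputable def jFtilq {D : ℕ} {ι κ : Type} [Fintype ι] [DecidableEq ι] [Fintype κ] (m : ℕ)
    (F q : κ → Ed D × Jet ι m D → ℝ) (u v : ι → Ed D → ℝ) (μ : Fin (D + 1)) : Ed D → ℝ :=
  bdryG m (fun c x => ∑ a, F a (x, jet m u x) * jpd (q a) c (x, jet m u x)) v μ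

/-- The adjoint equations' left-hand side E^i(F^aρ_a), with the ρ_a treated as
independent fields and their values substituted after the differentiations. -/
noncomputable def adjointOp {D : ℕ} {ι κ : Type} [Fintype ι] [DecidableEq ι] [Fintype κ] (m : ℕ)
    (F : κ → Ed D × Jet ι m D → ℝ) (u : ι → Ed D → ℝ) (ρ : κ → Ed D → ℝ) (i : ι) : Ed D → ℝ :=
  fun x => ∑ β : MIdx m D, (-1 : ℝ) ^ (β.1 : ℕ) *
    pds (MIdx.toList β) (fun y => ∑ a, jpd (F a) (i, β) (y, jet m u y) * ρ a y) x

/-- Solutions of the system F^a = 0 on Ω. -/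
def IsSol {D : ℕ} {ι κ : Type} (m : ℕ) (Ω : Set (Ed D)) (F : κ → Ed D × Jet ι m D → ℝ)
    (u : ι → Ed D → ℝ) : Prop :=
  SmoothFields Ω u ∧ ∀ a, ∀ x ∈ Ω, realize m (F a) u x = 0

/-- A characteristic δu (given by local functions) is a symmetry of F = 0. -/
def IsSymmetry {D : ℕ} {ι κ : Type} [Fintype ι] [DecidableEq ι] (m : ℕ) (Ω : Set (Ed D))
    (F : κ → Ed D × Jet ι m D → ℝ) (δu : ι → Ed D × Jet ι m D → ℝ) : Prop :=
  ∀ u, IsSol m Ω F u → ∀ a, ∀ x ∈ Ω,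
    variation m (F a) u (fun i => realize m (δu i) u) x = 0

/-- The u-part of a combined (u, ρ) jet. -/
def uPartJet {D : ℕ} {ι κ : Type} {m : ℕ} (z : Jet (ι ⊕ κ) m D) : Jet ι m D :=
  fun c => z (Sum.inl c.1, c.2)

/-- The auxiliary Lagrangian L̂ = F^a ρ_a as a local function of the combined fields (u, ρ). -/
noncomputable def Lhat {D : ℕ} {ι κ : Type} [Fintype κ] {m : ℕ}
    (F : κ → Ed D × Jet ι m D → ℝ) : Ed D × Jet (ι ⊕ κ) m D → ℝ :=
  fun p => ∑ a, F a (p.1, uPartJet p.2) * p.2 (Sum.inr a, zeroIdx)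

/-- The product F^a q_a as a single local function of u. -/
noncomputable def prodFq {D : ℕ} {ι κ : Type} [Fintype κ] {m : ℕ}
    (F q : κ → Ed D × Jet ι m D → ℝ) : Ed D × Jet ι m D → ℝ :=
  fun p => ∑ a, F a p * q a p

/-- Conservation law multiplier: F^a q_a = D_μ J^μ for every smooth u. -/
def Multiplier {D : ℕ} {ι κ : Type} [Fintype κ] (m : ℕ) (Ω : Set (Ed D))
    (F q : κ → Ed D × Jet ι m D → ℝ) (J : Fin (D + 1) → Ed D × Jet ι m D → ℝ) : Prop :=
  ∀ u, SmoothFields Ω u → ∀ x ∈ Ω,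
    (∑ a, realize m (F a) u x * realize m (q a) u x) = Dvg (fun μ => realize m (J μ) u) x

/-- Equivalence of configuration-indexed local currents relative to the system F = 0:
the difference is an identically conserved local current plus a local current
vanishing on all solutions. -/
def EquivCurrents {D : ℕ} {ι κ : Type} [Fintype ι] (m : ℕ) (Ω : Set (Ed D))
    (F : κ → Ed D × Jet ι m D → ℝ)
    (C1 C2 : (ι → Ed D → ℝ) → Fin (D + 1) → Ed D → ℝ) : Prop :=
  ∃ (m' : ℕ) (Jb Jh : Fin (D + 1) → Ed D × Jet ι m' D → ℝ),
    (∀ μ, ContDiff ℝ (⊤ : ℕ∞) (Jb μ)) ∧ (∀ μ, ContDiff ℝ (⊤ : ℕ∞) (Jh μ)) ∧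
    (∀ u, SmoothFields Ω u → ∀ μ, ∀ x ∈ Ω,
      C1 u μ x - C2 u μ x = realize m' (Jb μ) u x + realize m' (Jh μ) u x) ∧
    (∀ u, SmoothFields Ω u → ∀ x ∈ Ω, Dvg (fun μ => realize m' (Jb μ) u) x = 0) ∧
    (∀ u, IsSol m Ω F u → ∀ μ, ∀ x ∈ Ω, realize m' (Jh μ) u x = 0)

/-- Linearization G^a of F^a around the configuration u. -/
noncomputable def linearize {D : ℕ} {ι κ : Type} [Fintype ι] (m : ℕ)
    (F : κ → Ed D × Jet ι m D → ℝ) (u : ι → Ed D → ℝ) :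
    κ → Ed D × Jet ι m D → ℝ :=
  fun a p => fderiv ℝ (F a) (p.1, jet m u p.1) ((0 : Ed D), p.2)

/- ### Extended systems: fields (u, g), with F depending on g but not on its derivatives. -/

/-- Domain of extended local functions: base point, jet of u, and the values of g. -/
abbrev PJet (ι γ : Type) (m D : ℕ) := Ed D × Jet ι m D × (γ → ℝ)

noncomputable def realizeP {D : ℕ} {ι γ : Type} (m : ℕ)
    (f : PJet ι γ m D → ℝ) (u : ι → Ed D → ℝ) (g : γ → Ed D → ℝ) : Ed D → ℝ :=
  fun x => f (x, jet m u x, fun l => g l x)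

/-- ∂f/∂g_l for extended local functions. -/
noncomputable def gpd {D : ℕ} {ι γ : Type} [Fintype ι] [Fintype γ] [DecidableEq γ] {m : ℕ}
    (f : PJet ι γ m D → ℝ) (l : γ) : PJet ι γ m D → ℝ :=
  fun p => fderiv ℝ f p (0, 0, Pi.single l 1)

/-- ∂f/∂(∂_β u_i) for extended local functions. -/
noncomputable def jpdP {D : ℕ} {ι γ : Type} [Fintype ι] [DecidableEq ι] [Fintype γ] {m : ℕ}
    (f : PJet ι γ m D → ℝ) (c : ι × MIdx m D) : PJet ι γ m D → ℝ :=
  fun p => fderiv ℝ f p (0, Pi.single c 1, 0)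

/-- An extended local function viewed as a local function of the combined fields (u, g). -/
noncomputable def liftP {D : ℕ} {ι γ : Type} {m : ℕ} (f : PJet ι γ m D → ℝ) :
    Ed D × Jet (ι ⊕ γ) m D → ℝ :=
  fun p => f (p.1, fun c => p.2 (Sum.inl c.1, c.2), fun l => p.2 (Sum.inr l, zeroIdx))

/-- Setting all the derivatives of g to zero in a local function of (u, g). -/
noncomputable def dropGDerivs {D : ℕ} {ι γ : Type} {m : ℕ}
    (f : Ed D × Jet (ι ⊕ γ) m D → ℝ) : PJet ι γ m D → ℝ :=
  fun p => f (p.1, fun w =>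
    match w with
    | (Sum.inl i, β) => p.2.1 (i, β)
    | (Sum.inr l, β) => if (β.1 : ℕ) = 0 then p.2.2 l else 0)

/-- Parameterized conservation law multiplier: F^a q_a = D_μ J^μ for every smooth u
and every constant g. -/
def ParamMultiplier {D : ℕ} {ι γ κ : Type} [Fintype κ] (m : ℕ) (Ω : Set (Ed D))
    (F q : κ → PJet ι γ m D → ℝ) (J : Fin (D + 1) → PJet ι γ m D → ℝ) : Prop :=
  ∀ u, SmoothFields Ω u → ∀ c : γ → ℝ, ∀ x ∈ Ω,
    (∑ a, F a (x, jet m u x, c) * q a (x, jet m u x, c)) =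
      Dvg (fun μ y => J μ (y, jet m u y, c)) x

/-- Solutions of the extended system F^a = 0, ∂_μ g_l = 0 on Ω. -/
def ExtSol {D : ℕ} {ι γ κ : Type} (m : ℕ) (Ω : Set (Ed D))
    (F : κ → PJet ι γ m D → ℝ) (u : ι → Ed D → ℝ) (g : γ → Ed D → ℝ) : Prop :=
  SmoothFields Ω u ∧ SmoothFields Ω g ∧
    (∀ a, ∀ x ∈ Ω, realizeP m (F a) u g x = 0) ∧
    (∀ l μ, ∀ x ∈ Ω, pd μ (g l) x = 0)

/-- Conservation law multiplier {q_a, θ^{μl}} for the extended system, with current J. -/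
def ExtMultiplier {D : ℕ} {ι γ κ : Type} [Fintype κ] [Fintype γ] (m : ℕ) (Ω : Set (Ed D))
    (F q : κ → PJet ι γ m D → ℝ) (θ : Fin (D + 1) → γ → PJet ι γ m D → ℝ)
    (J : Fin (D + 1) → PJet ι γ m D → ℝ) : Prop :=
  ∀ u g, SmoothFields Ω u → SmoothFields Ω g → ∀ x ∈ Ω,
    ((∑ a, realizeP m (F a) u g x * realizeP m (q a) u g x) +
      ∑ μ, ∑ l, pd μ (g l) x * realizeP m (θ μ l) u g x) =
    Dvg (fun μ => realizeP m (J μ) u g) x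

/-- j^μ_{(Fρ)} for an extended system. -/
noncomputable def jFrhoP {D : ℕ} {ι γ κ : Type} [Fintype ι] [DecidableEq ι] [Fintype γ]
    [Fintype κ] (m : ℕ) (F : κ → PJet ι γ m D → ℝ) (u : ι → Ed D → ℝ) (g : γ → Ed D → ℝ)
    (ρ : κ → Ed D → ℝ) (v : ι → Ed D → ℝ) (μ : Fin (D + 1)) : Ed D → ℝ :=
  bdryG m (fun c x => ∑ a, jpdP (F a) c (x, jet m u x, fun l => g l x) * ρ a x) v μ

/-- j^μ_{(F̃q)}|_{F̃=F} for an extended system. -/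
noncomputable def jFtilqP {D : ℕ} {ι γ κ : Type} [Fintype ι] [DecidableEq ι] [Fintype γ]
    [Fintype κ] (m : ℕ) (F q : κ → PJet ι γ m D → ℝ) (u : ι → Ed D → ℝ) (g : γ → Ed D → ℝ)
    (v : ι → Ed D → ℝ) (μ : Fin (D + 1)) : Ed D → ℝ :=
  bdryG m (fun c x =>
    ∑ a, realizeP m (F a) u g x * jpdP (q a) c (x, jet m u x, fun l => g l x)) v μ

/-- The adjoint equations E^i(F^aρ_a) for an extended system. -/
noncomputable def adjointOpP {D : ℕ} {ι γ κ : Type} [Fintype ι] [DecidableEq ι] [Fintype γ]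
    [Fintype κ] (m : ℕ) (F : κ → PJet ι γ m D → ℝ) (u : ι → Ed D → ℝ) (g : γ → Ed D → ℝ)
    (ρ : κ → Ed D → ℝ) (i : ι) : Ed D → ℝ :=
  fun x => ∑ β : MIdx m D, (-1 : ℝ) ^ (β.1 : ℕ) *
    pds (MIdx.toList β)
      (fun y => ∑ a, jpdP (F a) (i, β) (y, jet m u y, fun l => g l y) * ρ a y) x

/-- Equivalence of configuration-indexed currents relative to the extended system. -/
def EquivCurrentsExt {D : ℕ} {ι γ κ : Type} [Fintype ι] [Fintype γ] (m : ℕ) (Ω : Set (Ed D))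
    (F : κ → PJet ι γ m D → ℝ)
    (C1 C2 : (ι → Ed D → ℝ) → (γ → Ed D → ℝ) → Fin (D + 1) → Ed D → ℝ) : Prop :=
  ∃ (m' : ℕ) (Jb Jh : Fin (D + 1) → Ed D × Jet (ι ⊕ γ) m' D → ℝ),
    (∀ μ, ContDiff ℝ (⊤ : ℕ∞) (Jb μ)) ∧ (∀ μ, ContDiff ℝ (⊤ : ℕ∞) (Jh μ)) ∧
    (∀ u g, SmoothFields Ω u → SmoothFields Ω g → ∀ μ, ∀ x ∈ Ω,
      C1 u g μ x - C2 u g μ x =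
        realize m' (Jb μ) (Sum.elim u g) x + realize m' (Jh μ) (Sum.elim u g) x) ∧
    (∀ u g, SmoothFields Ω u → SmoothFields Ω g → ∀ x ∈ Ω,
      Dvg (fun μ => realize m' (Jb μ) (Sum.elim u g)) x = 0) ∧
    (∀ u g, ExtSol m Ω F u g → ∀ μ, ∀ x ∈ Ω, realize m' (Jh μ) (Sum.elim u g) x = 0)

/-- The auxiliary Lagrangian Ľ = F^aρ_a + (∂_μ g_l)ϑ^{μl} of an extended system,
as a local function of the combined fields ((u, g), (ρ, ϑ)). -/
noncomputable def Lcheck {D : ℕ} {ι γ κ : Type} [Fintype κ] [Fintype γ] {m : ℕ} (hm : 0 < m)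
    (F : κ → PJet ι γ m D → ℝ) :
    Ed D × Jet ((ι ⊕ γ) ⊕ (κ ⊕ Fin (D + 1) × γ)) m D → ℝ :=
  fun p =>
    (∑ a, F a (p.1, fun c => p.2 (Sum.inl (Sum.inl c.1), c.2),
        fun l => p.2 (Sum.inl (Sum.inr l), zeroIdx)) * p.2 (Sum.inr (Sum.inl a), zeroIdx)) +
    ∑ μ, ∑ l, p.2 (Sum.inl (Sum.inr l), oneIdx hm μ) * p.2 (Sum.inr (Sum.inr (μ, l)), zeroIdx)

open Filter Topology MeasureTheory Set
open scoped ContDiff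

section Variational

variable {E : Type*} [NormedAddCommGroup E] [NormedSpace ℝ E] [FiniteDimensional ℝ E]
  [MeasurableSpace E] [BorelSpace E] {μ : Measure E}

theorem _root_.IsOpen.eqOn_zero_of_integral_mul_eq_zero [IsLocallyFiniteMeasure μ]
    [μ.IsOpenPosMeasure] {U : Set E} (hU : IsOpen U) {ψ : E → ℝ} (hψ : ContinuousOn ψ U)
    (h : ∀ g : E → ℝ, ContDiff ℝ ∞ g → HasCompactSupport g → tsupport g ⊆ U →
      ∫ x, g x * ψ x ∂μ = 0) :
    EqOn ψ 0 U := by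
  have hae := hU.ae_eq_zero_of_integral_contDiff_smul_eq_zero
    (hψ.locallyIntegrableOn hU.measurableSet) h
  exact Measure.eqOn_open_of_ae_eq ((ae_restrict_iff' hU.measurableSet).2 hae) hU hψ
    continuousOn_const

theorem integral_fderiv_eq_zero [μ.IsAddHaarMeasure] {f : E → ℝ} (hf : ContDiff ℝ 1 f)
    (hc : HasCompactSupport f) (v : E) : ∫ x, fderiv ℝ f x v ∂μ = 0 := by
  have hf' : Continuous fun x => fderiv ℝ f x v :=
    (hf.continuous_fderiv one_ne_zero).clm_apply continuous_const
  have hc' : HasCompactSupport fun x => fderiv ℝ f x v := hc.fderiv_apply (𝕜 := ℝ) v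
  -- integration by parts against the constant function `1`
  simpa using integral_mul_fderiv_eq_neg_fderiv_mul_of_integrable (μ := μ)
    (f := fun _ => (1 : ℝ)) (g := f) (v := v) (by simp)
    (by simpa using hf'.integrable_of_hasCompactSupport hc')
    (by simpa using hf.continuous.integrable_of_hasCompactSupport hc)
    (fun x _ => differentiableAt_const _) (fun x _ => hf.differentiable one_ne_zero x)

end Variational

theorem _root_.ContDiffOn.contDiff_indicator {E F : Type*} [NormedAddCommGroup E]
    [NormedSpace ℝ E] [NormedAddCommGroup F] [NormedSpace ℝ F] {n : WithTop ℕ∞} {U K : Set E}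
    {f : E → F}
    (hf : ContDiffOn ℝ n f U) (hU : IsOpen U) (hK : IsClosed K)
    (hf0 : ∀ x ∈ U, x ∉ K → f x = 0) (hKU : K ⊆ U) : ContDiff ℝ n (U.indicator f) := by
  have hzero : ∀ x ∉ K, U.indicator f x = 0 := fun x hx => by
    by_cases hxU : x ∈ U
    · rw [indicator_of_mem hxU, hf0 x hxU hx]
    · exact indicator_of_notMem hxU f
  refine contDiff_iff_contDiffAt.2 fun x => ?_
  by_cases hx : x ∈ U
  · exact (hf.contDiffAt (hU.mem_nhds hx)).congr_of_eventuallyEq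
      (eventuallyEq_of_mem (hU.mem_nhds hx) fun y hy => indicator_of_mem hy f)
  · exact contDiffAt_const.congr_of_eventuallyEq
      (eventuallyEq_of_mem (hK.isOpen_compl.mem_nhds fun h => hx (hKU h)) hzero)

section Calculus

variable {D : ℕ}

theorem pd_eventuallyEq {f g : Ed D → ℝ} {x : Ed D} (h : f =ᶠ[𝓝 x] g) (μ : Fin (D + 1)) :
    pd μ f =ᶠ[𝓝 x] pd μ g :=
  (h.fderiv (𝕜 := ℝ)).mono fun y hy => by simp only [pd, hy]

theorem pds_eventuallyEq {f g : Ed D → ℝ} {x : Ed D} (h : f =ᶠ[𝓝 x] g) :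
    ∀ l : List (Fin (D + 1)), pds l f =ᶠ[𝓝 x] pds l g
  | [] => h
  | μ :: l => pd_eventuallyEq (pds_eventuallyEq h l) μ

theorem jet_eq_of_eventuallyEq {ι : Type} (m : ℕ) {u v : ι → Ed D → ℝ} {x : Ed D}
    (h : ∀ i, u i =ᶠ[𝓝 x] v i) : jet m u x = jet m v x :=
  funext fun c => (pds_eventuallyEq (h c.1) c.2.toList).eq_of_nhds

theorem Dvg_congr {Y Z : Fin (D + 1) → Ed D → ℝ} {x : Ed D} (h : ∀ μ, Y μ =ᶠ[𝓝 x] Z μ) :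
    Dvg Y x = Dvg Z x :=
  Finset.sum_congr rfl fun μ _ => (pd_eventuallyEq (h μ) μ).eq_of_nhds

@[simp]
theorem pd_const (μ : Fin (D + 1)) (c : ℝ) : pd μ (fun _ : Ed D => c) = 0 := by
  funext x
  simp [pd]

@[simp]
theorem Dvg_zero (x : Ed D) : Dvg (fun _ _ => 0 : Fin (D + 1) → Ed D → ℝ) x = 0 := by
  simp [Dvg]

theorem pd_mul {f g : Ed D → ℝ} {x : Ed D} (hf : DifferentiableAt ℝ f x)
    (hg : DifferentiableAt ℝ g x) (μ : Fin (D + 1)) :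
    pd μ (fun y => f y * g y) x = pd μ f x * g x + f x * pd μ g x := by
  simp only [pd, fderiv_fun_mul hf hg, add_apply, smul_apply, smul_eq_mul]
  ring

theorem pd_sub {f g : Ed D → ℝ} {x : Ed D} (hf : DifferentiableAt ℝ f x)
    (hg : DifferentiableAt ℝ g x) (μ : Fin (D + 1)) :
    pd μ (fun y => f y - g y) x = pd μ f x - pd μ g x := by
  simp [pd, fderiv_fun_sub hf hg]

theorem Dvg_mul_left {g : Ed D → ℝ} {Z : Fin (D + 1) → Ed D → ℝ} {x : Ed D}
    (hg : DifferentiableAt ℝ g x) (hZ : ∀ μ, DifferentiableAt ℝ (Z μ) x) :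
    Dvg (fun μ y => g y * Z μ y) x = ∑ μ, pd μ g x * Z μ x + g x * Dvg Z x := by
  simp only [Dvg, pd_mul hg (hZ _), Finset.sum_add_distrib, Finset.mul_sum]

theorem Dvg_sub {Y Z : Fin (D + 1) → Ed D → ℝ} {x : Ed D}
    (hY : ∀ μ, DifferentiableAt ℝ (Y μ) x) (hZ : ∀ μ, DifferentiableAt ℝ (Z μ) x) :
    Dvg (fun μ y => Y μ y - Z μ y) x = Dvg Y x - Dvg Z x := by
  simp only [Dvg, pd_sub (hY _) (hZ _), Finset.sum_sub_distrib]

theorem integral_Dvg_eq_zero {Z : Fin (D + 1) → Ed D → ℝ} (hZ : ∀ μ, ContDiff ℝ 1 (Z μ))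
    (hc : ∀ μ, HasCompactSupport (Z μ)) : ∫ x, Dvg Z x = 0 := by
  have hint : ∀ μ, Integrable (pd μ (Z μ)) := fun μ =>
    (((hZ μ).continuous_fderiv one_ne_zero).clm_apply continuous_const
      ).integrable_of_hasCompactSupport ((hc μ).fderiv_apply (𝕜 := ℝ) _)
  rw [show (fun x => Dvg Z x) = fun x => ∑ μ, pd μ (Z μ) x from rfl,
    integral_finsetSum _ fun μ _ => hint μ]
  exact Finset.sum_eq_zero fun μ _ => integral_fderiv_eq_zero (hZ μ) (hc μ) _

end Calculus

section SmoothFields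

variable {D : ℕ} {Ω : Set (Ed D)}

theorem _root_.ContDiffOn.pd {f : Ed D → ℝ} (hf : ContDiffOn ℝ (⊤ : ℕ∞) f Ω) (hΩ : IsOpen Ω)
    (μ : Fin (D + 1)) : ContDiffOn ℝ (⊤ : ℕ∞) (pd μ f) Ω :=
  (hf.fderiv_of_isOpen hΩ (by exact_mod_cast le_top)).clm_apply contDiffOn_const

theorem _root_.ContDiffOn.pds {f : Ed D → ℝ} (hf : ContDiffOn ℝ (⊤ : ℕ∞) f Ω) (hΩ : IsOpen Ω) :
    ∀ l : List (Fin (D + 1)), ContDiffOn ℝ (⊤ : ℕ∞) (pds l f) Ω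
  | [] => hf
  | μ :: l => (hf.pds hΩ l).pd hΩ μ

theorem SmoothFields.sumElim {ι γ : Type} {u : ι → Ed D → ℝ} {v : γ → Ed D → ℝ}
    (hu : SmoothFields Ω u) (hv : SmoothFields Ω v) : SmoothFields Ω (Sum.elim u v)
  | .inl i => hu i
  | .inr l => hv l

theorem SmoothFields.contDiffOn_realize {ι : Type} [Fintype ι] {m : ℕ} {u : ι → Ed D → ℝ}
    (hu : SmoothFields Ω u) (hΩ : IsOpen Ω) {f : Ed D × Jet ι m D → ℝ}
    (hf : ContDiff ℝ (⊤ : ℕ∞) f) : ContDiffOn ℝ (⊤ : ℕ∞) (realize m f u) Ω :=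
  hf.comp_contDiffOn <| contDiffOn_id.prodMk <| contDiffOn_pi.2 fun c =>
    (hu c.1).pds hΩ c.2.toList

theorem SmoothFields.differentiableAt_realize {ι : Type} [Fintype ι] {m : ℕ}
    {u : ι → Ed D → ℝ} (hu : SmoothFields Ω u) (hΩ : IsOpen Ω) {f : Ed D × Jet ι m D → ℝ}
    (hf : ContDiff ℝ (⊤ : ℕ∞) f) {x : Ed D} (hx : x ∈ Ω) :
    DifferentiableAt ℝ (realize m f u) x :=
  ((hu.contDiffOn_realize hΩ hf).contDiffAt (hΩ.mem_nhds hx)).differentiableAt (by simp)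

end SmoothFields

theorem eqOn_zero_of_forall_mul_eq_Dvg {D : ℕ} {Ω : Set (Ed D)} (hΩ : IsOpen Ω) {ψ : Ed D → ℝ}
    (hψ : ContinuousOn ψ Ω)
    (h : ∀ g : Ed D → ℝ, ContDiff ℝ ∞ g → HasCompactSupport g → tsupport g ⊆ Ω →
      ∃ W : Fin (D + 1) → Ed D → ℝ, (∀ μ, ContDiffOn ℝ 1 (W μ) Ω) ∧
        (∀ μ, ∀ x ∈ Ω, x ∉ tsupport g → W μ x = 0) ∧ ∀ x ∈ Ω, Dvg W x = g x * ψ x) :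
    EqOn ψ 0 Ω := by
  refine hΩ.eqOn_zero_of_integral_mul_eq_zero (μ := volume) hψ fun g hg hgc hgΩ => ?_
  obtain ⟨W, hW, hW0, hWψ⟩ := h g hg hgc hgΩ
  set Z : Fin (D + 1) → Ed D → ℝ := fun μ => Ω.indicator (W μ)
  have hZ0 : ∀ μ, ∀ x ∉ tsupport g, Z μ x = 0 := fun μ x hx => by
    by_cases hxΩ : x ∈ Ω
    · simp only [Z, indicator_of_mem hxΩ, hW0 μ x hxΩ hx]
    · exact indicator_of_notMem hxΩ _
  have hZψ : ∀ x, Dvg Z x = g x * ψ x := by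
    intro x
    by_cases hx : x ∈ Ω
    · rw [← hWψ x hx]
      exact Dvg_congr fun μ =>
        eventuallyEq_of_mem (hΩ.mem_nhds hx) fun y hy => indicator_of_mem hy _
    · have hxg : x ∉ tsupport g := fun h => hx (hgΩ h)
      rw [image_eq_zero_of_notMem_tsupport hxg, zero_mul]
      exact (Dvg_congr fun μ => eventuallyEq_of_mem
        ((isClosed_tsupport g).isOpen_compl.mem_nhds hxg) (hZ0 μ)).trans (Dvg_zero x)
  calc ∫ x, g x * ψ x = ∫ x, Dvg Z x := by simp_rw [hZψ]
    _ = 0 := integral_Dvg_eq_zero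
      (fun μ => (hW μ).contDiff_indicator hΩ (isClosed_tsupport g) (hW0 μ) hgΩ)
      (fun μ => HasCompactSupport.intro hgc (hZ0 μ))

section TrivialExtension

variable {D m : ℕ} {ι κ : Type} {Ω : Set (Ed D)}
  {F q : κ → Ed D × Jet ι m D → ℝ} {ϑ : Fin (D + 1) → Ed D × Jet ι m D → ℝ}
  {J : Fin (D + 1) → Ed D × Jet (ι ⊕ Unit) m D → ℝ}

noncomputable def testCurrent (m : ℕ) (ϑ : Fin (D + 1) → Ed D × Jet ι m D → ℝ)
    (J : Fin (D + 1) → Ed D × Jet (ι ⊕ Unit) m D → ℝ) (u : ι → Ed D → ℝ) (g : Ed D → ℝ)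
    (μ : Fin (D + 1)) : Ed D → ℝ :=
  fun y => realize m (J μ) (Sum.elim u fun _ => g) y -
    realize m (J μ) (Sum.elim u fun _ _ => 0) y - g y * realize m (ϑ μ) u y

theorem testCurrent_eq_zero_of_notMem_tsupport (u : ι → Ed D → ℝ) {g : Ed D → ℝ} {y : Ed D}
    (hy : y ∉ tsupport g) (μ : Fin (D + 1)) : testCurrent m ϑ J u g μ y = 0 := by
  have hjet : jet m (Sum.elim u fun _ : Unit => g) y = jet m (Sum.elim u fun _ _ => 0) y :=
    jet_eq_of_eventuallyEq m <| Sum.forall.2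
      ⟨fun _ => EventuallyEq.rfl, fun _ => notMem_tsupport_iff_eventuallyEq.1 hy⟩
  simp only [testCurrent, realize, hjet, image_eq_zero_of_notMem_tsupport hy]
  ring

variable [Fintype ι] [Fintype κ]

def TrivialExtMultiplier (m : ℕ) (Ω : Set (Ed D)) (F q : κ → Ed D × Jet ι m D → ℝ)
    (ϑ : Fin (D + 1) → Ed D × Jet ι m D → ℝ)
    (J : Fin (D + 1) → Ed D × Jet (ι ⊕ Unit) m D → ℝ) : Prop :=
  ∀ (u : ι → Ed D → ℝ) (g : Ed D → ℝ), SmoothFields Ω u → ContDiffOn ℝ (⊤ : ℕ∞) g Ω →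
    ∀ x ∈ Ω, ((∑ a, realize m (F a) u x * (g x * realize m (q a) u x)) +
      ∑ μ, pd μ g x * realize m (ϑ μ) u x) =
    Dvg (fun μ => realize m (J μ) (Sum.elim u (fun _ => g))) x

theorem SmoothFields.contDiffOn_testCurrent {u : ι → Ed D → ℝ} (hu : SmoothFields Ω u)
    (hΩ : IsOpen Ω) (hϑ : ∀ μ, ContDiff ℝ (⊤ : ℕ∞) (ϑ μ)) (hJ : ∀ μ, ContDiff ℝ (⊤ : ℕ∞) (J μ))
    {g : Ed D → ℝ} (hg : ContDiffOn ℝ (⊤ : ℕ∞) g Ω) (μ : Fin (D + 1)) :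
    ContDiffOn ℝ (⊤ : ℕ∞) (testCurrent m ϑ J u g μ) Ω :=
  (((hu.sumElim fun _ => hg).contDiffOn_realize hΩ (hJ μ)).sub
    ((hu.sumElim fun _ => contDiffOn_const).contDiffOn_realize hΩ (hJ μ))).sub
    (hg.mul (hu.contDiffOn_realize hΩ (hϑ μ)))

theorem TrivialExtMultiplier.Dvg_testCurrent (hmult : TrivialExtMultiplier m Ω F q ϑ J)
    (hΩ : IsOpen Ω) (hϑ : ∀ μ, ContDiff ℝ (⊤ : ℕ∞) (ϑ μ)) (hJ : ∀ μ, ContDiff ℝ (⊤ : ℕ∞) (J μ))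
    {u : ι → Ed D → ℝ} (hu : SmoothFields Ω u) {g : Ed D → ℝ} (hg : ContDiffOn ℝ (⊤ : ℕ∞) g Ω)
    {x : Ed D} (hx : x ∈ Ω) :
    Dvg (testCurrent m ϑ J u g) x = g x * ((∑ a, realize m (F a) u x * realize m (q a) u x) -
      Dvg (fun μ => realize m (ϑ μ) u) x) := by
  have hug := hu.sumElim (v := fun _ : Unit => g) fun _ => hg
  have hu0 := hu.sumElim (v := fun (_ : Unit) (_ : Ed D) => (0 : ℝ)) fun _ => contDiffOn_const
  have dg : DifferentiableAt ℝ g x :=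
    (hg.contDiffAt (hΩ.mem_nhds hx)).differentiableAt (by simp)
  have dϑ := fun μ => hu.differentiableAt_realize hΩ (hϑ μ) hx
  have dJg := fun μ => hug.differentiableAt_realize hΩ (hJ μ) hx
  have dJ0 := fun μ => hu0.differentiableAt_realize hΩ (hJ μ) hx
  have hJ0 : Dvg (fun μ => realize m (J μ) (Sum.elim u fun _ _ => 0)) x = 0 := by
    simpa using (hmult u (fun _ => 0) hu contDiffOn_const x hx).symm
  unfold testCurrent
  rw [Dvg_sub (fun μ => (dJg μ).fun_sub (dJ0 μ)) fun μ => dg.fun_mul (dϑ μ),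
    Dvg_sub dJg dJ0, Dvg_mul_left dg dϑ, ← hmult u g hu hg x hx, hJ0]
  simp only [mul_sub, Finset.mul_sum, mul_left_comm (g x)]
  ring

theorem TrivialExtMultiplier.multiplier (hmult : TrivialExtMultiplier m Ω F q ϑ J)
    (hΩ : IsOpen Ω) (hF : ∀ a, ContDiff ℝ (⊤ : ℕ∞) (F a)) (hq : ∀ a, ContDiff ℝ (⊤ : ℕ∞) (q a))
    (hϑ : ∀ μ, ContDiff ℝ (⊤ : ℕ∞) (ϑ μ)) (hJ : ∀ μ, ContDiff ℝ (⊤ : ℕ∞) (J μ)) :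
    Multiplier m Ω F q ϑ := by
  intro u hu x hx
  refine sub_eq_zero.1 (eqOn_zero_of_forall_mul_eq_Dvg (ψ := fun y =>
    (∑ a, realize m (F a) u y * realize m (q a) u y) - Dvg (fun μ => realize m (ϑ μ) u) y)
    hΩ ?_ (fun g hg _ hgΩ => ?_) hx)
  · exact (continuousOn_finsetSum _ fun a _ =>
      ((hu.contDiffOn_realize hΩ (hF a)).mul (hu.contDiffOn_realize hΩ (hq a))).continuousOn).sub
      (continuousOn_finsetSum _ fun μ _ =>
        ((hu.contDiffOn_realize hΩ (hϑ μ)).pd hΩ μ).continuousOn)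
  · refine ⟨testCurrent m ϑ J u g, fun μ => ?_, fun μ y _ hy => ?_, fun y hy => ?_⟩
    · exact (hu.contDiffOn_testCurrent hΩ hϑ hJ hg.contDiffOn μ).of_le (by simp)
    · exact testCurrent_eq_zero_of_notMem_tsupport u hy μ
    · exact hmult.Dvg_testCurrent hΩ hϑ hJ hu hg.contDiffOn hy

theorem Multiplier.trivialExtension (h : Multiplier m Ω F q ϑ) (hΩ : IsOpen Ω)
    (hϑ : ∀ μ, ContDiff ℝ (⊤ : ℕ∞) (ϑ μ)) {u : ι → Ed D → ℝ} (hu : SmoothFields Ω u)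
    {g : Ed D → ℝ} (hg : ContDiffOn ℝ (⊤ : ℕ∞) g Ω) {x : Ed D} (hx : x ∈ Ω) :
    ((∑ a, realize m (F a) u x * (g x * realize m (q a) u x)) +
      ∑ μ, pd μ g x * realize m (ϑ μ) u x) =
    Dvg (fun μ y => g y * realize m (ϑ μ) u y) x := by
  rw [Dvg_mul_left ((hg.contDiffAt (hΩ.mem_nhds hx)).differentiableAt (by simp))
    fun μ => hu.differentiableAt_realize hΩ (hϑ μ) hx, ← h u hu x hx, Finset.mul_sum]
  simp only [mul_left_comm (g x)]
  ring

end TrivialExtension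

/-- If {g·q_a[u], ϑ^μ[u]} is a multiplier of the trivial extension for a
current J^μ[u,g], then ϑ^μ is a conserved current of F = 0 with multiplier q, gϑ^μ is a
conserved current of the trivial extension with the same multiplier, and gϑ^μ − J^μ is
identically conserved. -/
theorem statement18 (D N M m : ℕ) (Ω : Set (Ed D)) (hΩ : IsOpen Ω)
    (F : Fin M → Ed D × Jet (Fin N) m D → ℝ) (hF : ∀ a, ContDiff ℝ (⊤ : ℕ∞) (F a))
    (q : Fin M → Ed D × Jet (Fin N) m D → ℝ) (hq : ∀ a, ContDiff ℝ (⊤ : ℕ∞) (q a))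
    (ϑ : Fin (D + 1) → Ed D × Jet (Fin N) m D → ℝ) (hϑ : ∀ μ, ContDiff ℝ (⊤ : ℕ∞) (ϑ μ))
    (J : Fin (D + 1) → Ed D × Jet (Fin N ⊕ Unit) m D → ℝ)
    (hJ : ∀ μ, ContDiff ℝ (⊤ : ℕ∞) (J μ))
    (hmult : ∀ (u : Fin N → Ed D → ℝ) (g : Ed D → ℝ),
      SmoothFields Ω u → ContDiffOn ℝ (⊤ : ℕ∞) g Ω → ∀ x ∈ Ω,
      ((∑ a, realize m (F a) u x * (g x * realize m (q a) u x)) +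
        ∑ μ, pd μ g x * realize m (ϑ μ) u x) =
      Dvg (fun μ => realize m (J μ) (Sum.elim u (fun _ => g))) x) :
    -- (i) F^a q_a = D_μ ϑ^μ for every smooth u:
    (∀ u, SmoothFields Ω u → ∀ x ∈ Ω,
      (∑ a, realize m (F a) u x * realize m (q a) u x) =
        Dvg (fun μ => realize m (ϑ μ) u) x) ∧
    -- (ii) gϑ^μ is a conserved current of the trivial extension with multiplier {gq, ϑ}:
    (∀ (u : Fin N → Ed D → ℝ) (g : Ed D → ℝ),
      SmoothFields Ω u → ContDiffOn ℝ (⊤ : ℕ∞) g Ω → ∀ x ∈ Ω,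
      ((∑ a, realize m (F a) u x * (g x * realize m (q a) u x)) +
        ∑ μ, pd μ g x * realize m (ϑ μ) u x) =
      Dvg (fun μ y => g y * realize m (ϑ μ) u y) x) ∧
    -- and gϑ^μ − J^μ is identically conserved:
    (∀ (u : Fin N → Ed D → ℝ) (g : Ed D → ℝ),
      SmoothFields Ω u → ContDiffOn ℝ (⊤ : ℕ∞) g Ω → ∀ x ∈ Ω,
      Dvg (fun μ y => g y * realize m (ϑ μ) u y -
        realize m (J μ) (Sum.elim u (fun _ => g)) y) x = 0) := by
  have hext : TrivialExtMultiplier m Ω F q ϑ J := hmult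
  have hϑJ := hext.multiplier hΩ hF hq hϑ hJ
  refine ⟨hϑJ, fun u g hu hg x hx => hϑJ.trivialExtension hΩ hϑ hu hg hx,
    fun u g hu hg x hx => ?_⟩
  have dg : DifferentiableAt ℝ g x := (hg.contDiffAt (hΩ.mem_nhds hx)).differentiableAt (by simp)
  rw [Dvg_sub (fun μ => dg.fun_mul (hu.differentiableAt_realize hΩ (hϑ μ) hx))
      fun μ => (hu.sumElim fun _ => hg).differentiableAt_realize hΩ (hJ μ) hx,
    ← hϑJ.trivialExtension hΩ hϑ hu hg hx, ← hmult u g hu hg x hx, sub_self]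

end Paper
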